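/- arXiv:1201.2147 — 4 statements merged into one kernel-verified Lean document; each statement's English description precedes it below -/
import Mathlib

section
/- For every multi-index p ∈ ℕⁿ with |p| ≤ m, ∫_{(0,∞)ⁿ} t₁^{p₁} ⋯ tₙ^{pₙ} · (1 + t₁ + ⋯ + tₙ)^{-(n+m+1)} dt₁ ⋯ dtₙ = p! · (m − |p|)! / (n+m)!. -/
/-!
For `a > 0`, integration by parts in `p` evaluates the one-variable Beta-type integral
`∫₀^∞ tᵖ (a + t)^-(p+k+2) dt = p! k! / (p+k+1)! · a^-(k+1)`.
Integrating out `t₀` with `a = 1 + t₁ + ⋯` turns the `n`-dimensional integral into one of the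
same shape in `n - 1` variables with `m` replaced by `m - p₀`, and the factorials telescope.
Tonelli's theorem justifies the iteration, so everything is done for the lower Lebesgue integral
of the nonnegative integrand and converted back at the end.
-/

open MeasureTheory Set Filter Topology
open scoped ENNReal

theorem hasDerivAt_neg_inv_mul_inv_add_pow (k : ℕ) {a x : ℝ} (ha : 0 < a) (hx : 0 ≤ x) :
    HasDerivAt (fun t => -(((k : ℝ) + 1)⁻¹ * ((a + t) ^ (k + 1))⁻¹)) ((a + x) ^ (k + 2))⁻¹ x := by
  refine ((((hasDerivAt_id' x).const_add a).fun_pow (k + 1)).fun_inv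
    (pow_ne_zero _ (add_pos_of_pos_of_nonneg ha hx).ne') |>.const_mul ((k : ℝ) + 1)⁻¹
    |>.fun_neg).congr_deriv ?_
  rw [add_tsub_cancel_right]
  field_simp
  push_cast
  ring

theorem tendsto_inv_add_pow_atTop (k : ℕ) (a : ℝ) :
    Tendsto (fun t : ℝ => ((a + t) ^ (k + 1))⁻¹) atTop (𝓝 0) :=
  tendsto_inv_atTop_zero.comp <|
    (tendsto_pow_atTop k.succ_ne_zero).comp (tendsto_atTop_add_const_left _ a tendsto_id)

theorem tendsto_inv_mul_inv_add_pow_atTop (k : ℕ) (a : ℝ) :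
    Tendsto (fun t => ((k : ℝ) + 1)⁻¹ * ((a + t) ^ (k + 1))⁻¹) atTop (𝓝 0) := by
  simpa using (tendsto_inv_add_pow_atTop k a).const_mul ((k : ℝ) + 1)⁻¹

theorem integrableOn_inv_add_pow (k : ℕ) {a : ℝ} (ha : 0 < a) :
    IntegrableOn (fun t : ℝ => ((a + t) ^ (k + 2))⁻¹) (Ioi 0) :=
  integrableOn_Ioi_deriv_of_nonneg' (fun x hx => hasDerivAt_neg_inv_mul_inv_add_pow k ha hx)
    (fun x hx => by have := hx.out; positivity) (tendsto_inv_mul_inv_add_pow_atTop k a).neg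

theorem integral_inv_add_pow (k : ℕ) {a : ℝ} (ha : 0 < a) :
    ∫ t in Ioi (0 : ℝ), ((a + t) ^ (k + 2))⁻¹ = ((k + 1) * a ^ (k + 1))⁻¹ := by
  rw [integral_Ioi_of_hasDerivAt_of_nonneg' (fun x hx => hasDerivAt_neg_inv_mul_inv_add_pow k ha hx)
    (fun x hx => by have := hx.out; positivity) (tendsto_inv_mul_inv_add_pow_atTop k a).neg]
  simp [mul_comm]

theorem pow_mul_inv_add_pow_le {a t : ℝ} (ha : 0 < a) (ht : 0 ≤ t) (p j : ℕ) :
    t ^ p * ((a + t) ^ (p + j))⁻¹ ≤ ((a + t) ^ j)⁻¹ := by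
  have hat : 0 < a + t := by linarith
  rw [pow_add, mul_inv, ← mul_assoc]
  refine mul_le_of_le_one_left (by positivity) ?_
  rw [← div_eq_mul_inv, div_le_one (by positivity)]
  exact pow_le_pow_left₀ ht (by linarith) p

theorem integrableOn_pow_mul_inv_add_pow (p k : ℕ) {a : ℝ} (ha : 0 < a) :
    IntegrableOn (fun t : ℝ => t ^ p * ((a + t) ^ (p + k + 2))⁻¹) (Ioi 0) := by
  refine (integrableOn_inv_add_pow k ha).mono' (by fun_prop) ?_
  filter_upwards [ae_restrict_mem measurableSet_Ioi] with t ht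
  have ht : 0 < t := ht
  rw [Real.norm_of_nonneg (by positivity), add_assoc]
  exact pow_mul_inv_add_pow_le ha ht.le p (k + 2)

theorem integral_pow_succ_mul_inv_add_pow (p k : ℕ) {a : ℝ} (ha : 0 < a) :
    ((p : ℝ) + k + 2) * ∫ t in Ioi (0 : ℝ), t ^ (p + 1) * ((a + t) ^ (p + 1 + k + 2))⁻¹ =
      (p + 1) * ∫ t in Ioi (0 : ℝ), t ^ p * ((a + t) ^ (p + k + 2))⁻¹ := by
  -- Integration by parts: the boundary term `F` vanishes at `0` and at `∞`.
  set F : ℝ → ℝ := fun t => t ^ (p + 1) * ((a + t) ^ (p + k + 2))⁻¹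
  have hderiv : ∀ x ∈ Ici (0 : ℝ), HasDerivAt F
      ((p + 1) * (x ^ p * ((a + x) ^ (p + k + 2))⁻¹) -
        (p + k + 2) * (x ^ (p + 1) * ((a + x) ^ (p + 1 + k + 2))⁻¹)) x := by
    intro x hx
    have hax : 0 < a + x := by linarith [hx.out]
    refine ((hasDerivAt_pow (p + 1) x).mul ((((hasDerivAt_id' x).const_add a).fun_pow _).fun_inv
      (pow_ne_zero _ hax.ne'))).congr_deriv ?_
    rw [add_tsub_cancel_right, show p + k + 2 - 1 = p + k + 1 by omega]
    field_simp
    push_cast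
    ring
  have hlim : Tendsto F atTop (𝓝 0) := by
    refine squeeze_zero' ?_ ?_ (tendsto_inv_add_pow_atTop k a)
    · filter_upwards [eventually_ge_atTop 0] with t ht
      have : 0 < a + t := by linarith
      positivity
    · filter_upwards [eventually_ge_atTop 0] with t ht
      simpa only [F, show p + k + 2 = p + 1 + (k + 1) by ring] using
        pow_mul_inv_add_pow_le ha ht (p + 1) (k + 1)
  have h := integral_Ioi_of_hasDerivAt_of_tendsto' hderiv
    (((integrableOn_pow_mul_inv_add_pow p k ha).const_mul _).sub
      ((integrableOn_pow_mul_inv_add_pow (p + 1) k ha).const_mul _)) hlim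
  rw [integral_sub ((integrableOn_pow_mul_inv_add_pow p k ha).const_mul _)
    ((integrableOn_pow_mul_inv_add_pow (p + 1) k ha).const_mul _), integral_const_mul,
    integral_const_mul] at h
  simp only [F, zero_pow p.succ_ne_zero, zero_mul, sub_zero] at h
  linarith

theorem integral_pow_mul_inv_add_pow (p k : ℕ) {a : ℝ} (ha : 0 < a) :
    ∫ t in Ioi (0 : ℝ), t ^ p * ((a + t) ^ (p + k + 2))⁻¹ =
      p.factorial * k.factorial / (p + k + 1).factorial * (a ^ (k + 1))⁻¹ := by
  induction p with
  | zero =>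
    simp only [pow_zero, one_mul, zero_add, integral_inv_add_pow k ha, Nat.factorial_zero,
      Nat.factorial_succ, Nat.cast_mul]
    field_simp
    push_cast
    ring
  | succ p ih =>
    have h := integral_pow_succ_mul_inv_add_pow p k ha
    rw [ih] at h
    have hk : ((p : ℝ) + k + 2) ≠ 0 := by positivity
    rw [show p + 1 + k + 1 = (p + k + 1) + 1 by ring, Nat.factorial_succ, Nat.factorial_succ]
    field_simp at h ⊢
    push_cast
    linear_combination h

theorem setLIntegral_univ_pi_fin_succ {α : Type*} [MeasureSpace α]
    [SigmaFinite (volume : Measure α)] {n : ℕ} (s : Set α) {f : (Fin (n + 1) → α) → ℝ≥0∞}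
    (hf : Measurable f) :
    ∫⁻ t in univ.pi fun _ => s, f t = ∫⁻ y in univ.pi fun _ => s, ∫⁻ x in s, f (Fin.cons x y) := by
  set e := MeasurableEquiv.piFinSuccAbove (fun _ : Fin (n + 1) => α) 0
  have he : MeasurePreserving e.symm volume volume :=
    (volume_preserving_piFinSuccAbove (fun _ : Fin (n + 1) => α) 0).symm
  have hpre : e.symm ⁻¹' (univ.pi fun _ => s) = s ×ˢ univ.pi fun _ => s := by
    ext ⟨x, y⟩
    simp [e, Fin.forall_fin_succ]
  rw [← he.setLIntegral_comp_preimage_emb e.symm.measurableEmbedding, hpre,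
    Measure.volume_eq_prod, ← Measure.prod_restrict,
    lintegral_prod_symm' (μ := volume.restrict s) (ν := volume.restrict (univ.pi fun _ => s))
      (fun z => f (e.symm z)) (hf.comp e.symm.measurable)]
  simp only [e, MeasurableEquiv.piFinSuccAbove_symm_apply, Fin.insertNthEquiv_zero, Fin.consEquiv,
    Equiv.coe_fn_mk]

theorem lintegral_pow_mul_inv_add_pow (p k : ℕ) {a : ℝ} (ha : 0 < a) :
    ∫⁻ t in Ioi (0 : ℝ), ENNReal.ofReal (t ^ p * ((a + t) ^ (p + k + 2))⁻¹) =
      ENNReal.ofReal (p.factorial * k.factorial / (p + k + 1).factorial * (a ^ (k + 1))⁻¹) := by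
  rw [← integral_pow_mul_inv_add_pow p k ha, ofReal_integral_eq_lintegral_ofReal
    (integrableOn_pow_mul_inv_add_pow p k ha)]
  filter_upwards [ae_restrict_mem measurableSet_Ioi] with t ht
  have ht : 0 < t := ht
  positivity

theorem lintegral_prod_pow_mul_inv_one_add_sum_pow (n r : ℕ) (p : Fin n → ℕ) :
    ∫⁻ t in univ.pi fun _ => Ioi (0 : ℝ),
        ENNReal.ofReal ((∏ j, t j ^ p j) * ((1 + ∑ j, t j) ^ (n + ∑ j, p j + r + 1))⁻¹) =
      ENNReal.ofReal ((∏ j, ((p j).factorial : ℝ)) * r.factorial /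
        (n + ∑ j, p j + r).factorial) := by
  induction n with
  | zero => simp [volume_pi, Measure.pi_pi, Nat.factorial_ne_zero]
  | succ n ih =>
    refine Fin.consCases (fun p₀ q => ?_) p
    rw [setLIntegral_univ_pi_fin_succ _ (by fun_prop)]
    simp only [Fin.prod_univ_succ, Fin.sum_univ_succ, Fin.cons_zero, Fin.cons_succ]
    set K := n + ∑ j, q j + r
    have hinner : ∀ y ∈ univ.pi fun _ => Ioi (0 : ℝ),
        ∫⁻ x in Ioi (0 : ℝ), ENNReal.ofReal (x ^ p₀ * (∏ j, y j ^ q j) *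
          ((1 + (x + ∑ j, y j)) ^ (n + 1 + (p₀ + ∑ j, q j) + r + 1))⁻¹) =
        ENNReal.ofReal (p₀.factorial * K.factorial / (p₀ + K + 1).factorial) *
          ENNReal.ofReal ((∏ j, y j ^ q j) * ((1 + ∑ j, y j) ^ (n + ∑ j, q j + r + 1))⁻¹) := by
      intro y hy
      have hy : ∀ j, 0 < y j := fun j => hy j (mem_univ j)
      have ha : 0 < 1 + ∑ j, y j := by
        have := Finset.sum_nonneg fun j (_ : j ∈ Finset.univ) => (hy j).le
        linarith
      have hC : 0 ≤ ∏ j, y j ^ q j := Finset.prod_nonneg fun j _ => pow_nonneg (hy j).le _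
      have hsplit : ∀ x : ℝ, ENNReal.ofReal (x ^ p₀ * (∏ j, y j ^ q j) *
          ((1 + (x + ∑ j, y j)) ^ (n + 1 + (p₀ + ∑ j, q j) + r + 1))⁻¹) =
          ENNReal.ofReal (∏ j, y j ^ q j) *
            ENNReal.ofReal (x ^ p₀ * ((1 + ∑ j, y j + x) ^ (p₀ + K + 2))⁻¹) := by
        intro x
        rw [← ENNReal.ofReal_mul hC, show n + 1 + (p₀ + ∑ j, q j) + r + 1 = p₀ + K + 2 by ring,
          show 1 + (x + ∑ j, y j) = 1 + ∑ j, y j + x by ring]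
        congr 1
        ring
      simp_rw [hsplit]
      rw [lintegral_const_mul _ (by fun_prop), lintegral_pow_mul_inv_add_pow _ _ ha,
        ← ENNReal.ofReal_mul hC, ← ENNReal.ofReal_mul (by positivity)]
      congr 1
      ring
    rw [setLIntegral_congr_fun (MeasurableSet.univ_pi fun _ => measurableSet_Ioi) hinner,
      lintegral_const_mul _ (by fun_prop), ih q, ← ENNReal.ofReal_mul (by positivity),
      show n + 1 + (p₀ + ∑ j, q j) + r = p₀ + K + 1 by ring]
    congr 1
    simp only [K]
    field_simp

theorem stmt1_general (n m : ℕ) (p : Fin n → ℕ) (hp : ∑ j, p j ≤ m) :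
    ∫ t in Set.univ.pi fun _ : Fin n => Set.Ioi (0 : ℝ),
        (∏ j, t j ^ p j) * ((1 + ∑ j, t j) ^ (n + m + 1))⁻¹ =
      ((∏ j, (p j).factorial) * (m - ∑ j, p j).factorial : ℕ) / ((n + m).factorial : ℝ) := by
  obtain ⟨r, rfl⟩ := Nat.exists_eq_add_of_le hp
  have hnonneg : 0 ≤ᵐ[volume.restrict (univ.pi fun _ : Fin n => Ioi (0 : ℝ))]
      fun t => (∏ j, t j ^ p j) * ((1 + ∑ j, t j) ^ (n + (∑ j, p j + r) + 1))⁻¹ := by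
    filter_upwards [ae_restrict_mem (MeasurableSet.univ_pi fun _ => measurableSet_Ioi)] with t ht
    have ht : ∀ j, 0 < t j := fun j => ht j (mem_univ j)
    have : 0 ≤ ∑ j, t j := Finset.sum_nonneg fun j _ => (ht j).le
    have : 0 ≤ ∏ j, t j ^ p j := Finset.prod_nonneg fun j _ => pow_nonneg (ht j).le _
    positivity
  rw [integral_eq_lintegral_of_nonneg_ae hnonneg (by fun_prop), ← add_assoc,
    lintegral_prod_pow_mul_inv_one_add_sum_pow, ENNReal.toReal_ofReal (by positivity),
    Nat.add_sub_cancel_left, Nat.cast_mul, Nat.cast_prod]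

/-- For every multi-index `p ∈ ℕⁿ` with `|p| ≤ m`,
`∫_{(0,∞)ⁿ} t₁^{p₁} ⋯ tₙ^{pₙ} (1 + t₁ + ⋯ + tₙ)^{-(n+m+1)} dt = p!(m−|p|)!/(n+m)!`. -/
theorem stmt1 (n m : ℕ) (hn : 1 ≤ n) (p : Fin n → ℕ) (hp : ∑ j, p j ≤ m) :
    ∫ t in Set.univ.pi fun _ : Fin n => Set.Ioi (0 : ℝ),
        (∏ j, t j ^ p j) * ((1 + ∑ j, t j) ^ (n + m + 1))⁻¹ =
      ((∏ j, (p j).factorial) * (m - ∑ j, p j).factorial : ℕ) / ((n + m).factorial : ℝ) :=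
  stmt1_general n m p hp
end

section
/- For all multi-indices p, q ∈ J_n(m), the inner product of the monomials z^p and z^q in L²(ℂⁿ, ν_m) satisfies ∫_{ℂⁿ} z^p · conj(z)^q dν_m(z) = p! · (m − |p|)! / m! if p = q, and equals 0 if p ≠ q. Consequently, the family { (m!/(p! · (m−|p|)!))^{1/2} · z^p : p ∈ J_n(m) } is orthonormal in L²(ℂⁿ, ν_m). -/
/-!
Rotating one coordinate, `z_j ↦ e^{iθ} z_j`, preserves `ν_m` and multiplies `z^p conj(z)^q` by
`e^{i(p_j - q_j)θ}`; with `θ = π / (p_j - q_j)` this shows that the off-diagonal moments vanish.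
The diagonal moments are integrals `∫ ∏ |z_j|^{2p_j} (c + |z|²)^{-N} dV`, computed by Fubini one
coordinate at a time: integrating out `z_2, …, z_n` leaves an integral of the same kind in `z_1`,
with `c` replaced by `c + |z_1|²`, and in polar coordinates the one-variable integral is the Beta
integral `∫_0^∞ r^{2p+1} (c + r²)^{-(p+j+2)} dr = p! j! / (2 (p+j+1)! c^{j+1})`.
-/

open MeasureTheory

/-- The weighted measure `ν_m` on `ℂⁿ`. -/
noncomputable def nu (n m : ℕ) : Measure (Fin n → ℂ) :=
  volume.withDensity fun z =>
    ENNReal.ofReal (((n + m).factorial : ℝ) / (Real.pi ^ n * m.factorial) *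
      ((1 + ∑ j, ‖z j‖ ^ 2) ^ (n + m + 1))⁻¹)

open Set Filter Topology ComplexConjugate
open scoped Nat

theorem integrableOn_and_integral_Ioi_mul_div_add_sq_pow {c : ℝ} (hc : 0 < c) (j : ℕ) :
    IntegrableOn (fun r : ℝ => r / (c + r ^ 2) ^ (j + 2)) (Ioi 0) ∧
      ∫ r in Ioi (0 : ℝ), r / (c + r ^ 2) ^ (j + 2) = 1 / (2 * (j + 1) * c ^ (j + 1)) := by
  have hderiv : ∀ r ∈ Ici (0 : ℝ), HasDerivAt
      (fun r => -(2 * (j + 1) * (c + r ^ 2) ^ (j + 1) : ℝ)⁻¹) (r / (c + r ^ 2) ^ (j + 2)) r := by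
    intro r _
    have hne : (2 * (j + 1) * (c + r ^ 2) ^ (j + 1) : ℝ) ≠ 0 := by positivity
    refine (((((hasDerivAt_pow 2 r).const_add c).pow (j + 1)).const_mul
      (2 * (j + 1) : ℝ)).inv hne).neg.congr_deriv ?_
    simp only [Pi.pow_apply]
    field_simp
    push_cast
    ring
  have hnonneg : ∀ r ∈ Ioi (0 : ℝ), 0 ≤ r / (c + r ^ 2) ^ (j + 2) :=
    fun r hr => by have : 0 < r := hr; positivity
  have hlim : Tendsto (fun r => -(2 * (j + 1) * (c + r ^ 2) ^ (j + 1) : ℝ)⁻¹) atTop (𝓝 0) := by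
    rw [← neg_zero]
    refine (tendsto_inv_atTop_zero.comp (Tendsto.const_mul_atTop (by positivity) ?_)).neg
    exact (tendsto_pow_atTop (Nat.succ_ne_zero j)).comp
      (tendsto_atTop_add_const_left _ c (tendsto_pow_atTop two_ne_zero))
  refine ⟨integrableOn_Ioi_deriv_of_nonneg' hderiv hnonneg hlim, ?_⟩
  rw [integral_Ioi_of_hasDerivAt_of_nonneg' hderiv hnonneg hlim]
  field_simp
  ring

theorem integrableOn_and_integral_Ioi_pow_div_add_sq_pow {c : ℝ} (hc : 0 < c) (p j : ℕ) :
    IntegrableOn (fun r : ℝ => r ^ (2 * p + 1) / (c + r ^ 2) ^ (p + j + 2)) (Ioi 0) ∧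
      ∫ r in Ioi (0 : ℝ), r ^ (2 * p + 1) / (c + r ^ 2) ^ (p + j + 2) =
        p ! * j ! / (2 * (p + j + 1)! * c ^ (j + 1)) := by
  induction p generalizing j with
  | zero =>
    simp only [mul_zero, zero_add, pow_one, Nat.factorial_zero, Nat.cast_one, one_mul,
      Nat.factorial_succ, Nat.cast_mul]
    obtain ⟨hint, hval⟩ := integrableOn_and_integral_Ioi_mul_div_add_sq_pow hc j
    refine ⟨hint, ?_⟩
    rw [hval]
    push_cast
    field_simp
  | succ p ih =>
    obtain ⟨hint, hval⟩ := ih j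
    obtain ⟨hint', hval'⟩ := ih (j + 1)
    -- `r ^ 2 = (c + r ^ 2) - c` lowers the power of `r` by two
    have hsplit : ∀ r ∈ Ioi (0 : ℝ), r ^ (2 * (p + 1) + 1) / (c + r ^ 2) ^ (p + 1 + j + 2) =
        r ^ (2 * p + 1) / (c + r ^ 2) ^ (p + j + 2) -
          c * (r ^ (2 * p + 1) / (c + r ^ 2) ^ (p + (j + 1) + 2)) := by
      intro r _
      rw [show p + 1 + j + 2 = p + (j + 1) + 2 by ring]
      field_simp
      ring
    refine ⟨(hint.sub (hint'.const_mul c)).congr_fun (fun r hr => (hsplit r hr).symm)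
      measurableSet_Ioi, ?_⟩
    rw [setIntegral_congr_fun measurableSet_Ioi hsplit, integral_sub hint (hint'.const_mul c),
      integral_const_mul, hval, hval', show p + (j + 1) + 1 = p + j + 1 + 1 by ring,
      show p + 1 + j + 1 = p + j + 1 + 1 by ring]
    simp only [Nat.factorial_succ]
    push_cast
    field_simp
    ring

theorem Complex.integrable_and_integral_norm_pow_div_add_sq_pow {c : ℝ} (hc : 0 < c) (p j : ℕ) :
    Integrable (fun z : ℂ => ‖z‖ ^ (2 * p) / (c + ‖z‖ ^ 2) ^ (p + j + 2)) ∧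
      ∫ z : ℂ, ‖z‖ ^ (2 * p) / (c + ‖z‖ ^ 2) ^ (p + j + 2) =
        Real.pi * p ! * j ! / ((p + j + 1)! * c ^ (j + 1)) := by
  obtain ⟨hint, hval⟩ := integrableOn_and_integral_Ioi_pow_div_add_sq_pow hc p j
  have hpolar : ∀ r : ℝ, r ^ (Module.finrank ℝ ℂ - 1) • (r ^ (2 * p) / (c + r ^ 2) ^ (p + j + 2)) =
      r ^ (2 * p + 1) / (c + r ^ 2) ^ (p + j + 2) := by
    intro r
    rw [Complex.finrank_real_complex, smul_eq_mul, mul_div_assoc', pow_succ]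
    ring
  refine ⟨(integrable_fun_norm_addHaar volume
    (f := fun r => r ^ (2 * p) / (c + r ^ 2) ^ (p + j + 2))).2 ?_, ?_⟩
  · simpa only [hpolar] using hint
  · rw [integral_fun_norm_addHaar volume (fun r => r ^ (2 * p) / (c + r ^ 2) ^ (p + j + 2)),
      funext hpolar, hval, Complex.finrank_real_complex, measureReal_def, Complex.volume_ball]
    simp only [ENNReal.ofReal_one, one_pow, one_mul, ENNReal.coe_toReal, NNReal.coe_real_pi,
      smul_eq_mul, nsmul_eq_mul, Nat.cast_ofNat]
    field_simp

theorem integrable_and_integral_prod_of_nonneg {α β : Type*} [MeasurableSpace α]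
    [MeasurableSpace β] {μ : Measure α} {ν : Measure β} [SFinite μ] [SFinite ν]
    {G : α × β → ℝ} {f : α → ℝ} (hG : AEStronglyMeasurable G (μ.prod ν)) (hG₀ : 0 ≤ G)
    (hsection : ∀ᵐ x ∂μ, Integrable (fun y => G (x, y)) ν ∧ ∫ y, G (x, y) ∂ν = f x)
    (hf : Integrable f μ) :
    Integrable G (μ.prod ν) ∧ ∫ w, G w ∂(μ.prod ν) = ∫ x, f x ∂μ := by
  have hsection' : ∀ᵐ x ∂μ, ∫ y, ‖G (x, y)‖ ∂ν = f x := by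
    filter_upwards [hsection] with x hx
    simp only [Real.norm_of_nonneg (hG₀ _), hx.2]
  have hGint : Integrable G (μ.prod ν) := (integrable_prod_iff hG).2
    ⟨hsection.mono fun x hx => hx.1, hf.congr (hsection'.mono fun x hx => hx.symm)⟩
  refine ⟨hGint, ?_⟩
  rw [integral_prod G hGint]
  exact integral_congr_ae (hsection.mono fun x hx => hx.2)

theorem integrable_and_integral_of_comp_cons {E : Type*} [MeasureSpace E]
    [SigmaFinite (volume : Measure E)] {n : ℕ} {F : (Fin (n + 1) → E) → ℝ} {I : ℝ}
    (h : Integrable (fun w : E × (Fin n → E) => F (Fin.cons w.1 w.2)) (volume.prod volume) ∧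
      ∫ w, F (Fin.cons w.1 w.2) ∂(volume.prod volume) = I) :
    Integrable F ∧ ∫ z, F z = I := by
  set e := MeasurableEquiv.piFinSuccAbove (fun _ : Fin (n + 1) => E) 0
  have he : MeasurePreserving e.symm (volume.prod volume) volume :=
    (volume_preserving_piFinSuccAbove (fun _ : Fin (n + 1) => E) 0).symm
  have hcons : F ∘ e.symm = fun w => F (Fin.cons w.1 w.2) := by
    ext w
    simp only [Function.comp_apply, e, MeasurableEquiv.piFinSuccAbove_symm_apply,
      Fin.insertNthEquiv_zero]
    rfl
  refine ⟨(he.integrable_comp_emb e.symm.measurableEmbedding).1 (hcons ▸ h.1), ?_⟩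
  rw [← he.integral_comp' F, ← h.2, ← hcons]
  rfl

theorem integrable_and_integral_prod_norm_pow_div_add_sum_sq_pow (n : ℕ) (p : Fin n → ℕ) (j : ℕ)
    {c : ℝ} (hc : 0 < c) :
    Integrable (fun z : Fin n → ℂ =>
        (∏ i, ‖z i‖ ^ (2 * p i)) / (c + ∑ i, ‖z i‖ ^ 2) ^ (∑ i, p i + n + 1 + j)) ∧
      ∫ z : Fin n → ℂ, (∏ i, ‖z i‖ ^ (2 * p i)) / (c + ∑ i, ‖z i‖ ^ 2) ^ (∑ i, p i + n + 1 + j) =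
        Real.pi ^ n * (∏ i, ((p i)! : ℝ)) * j ! / ((∑ i, p i + n + j)! * c ^ (j + 1)) := by
  induction n generalizing j c with
  | zero =>
    simp only [Finset.univ_eq_empty, Finset.prod_empty, Finset.sum_empty, integral_const]
    refine ⟨integrable_const _, ?_⟩
    simp only [volume_pi, measureReal_def, Measure.pi_univ, Finset.univ_eq_empty,
      Finset.prod_empty, ENNReal.toReal_one, one_smul, add_zero, zero_add, pow_zero, one_mul]
    field_simp
    ring
  | succ n ih =>
    set k := p 0 + 1 + j
    set G := fun w : ℂ × (Fin n → ℂ) => ‖w.1‖ ^ (2 * p 0) *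
      ((∏ i : Fin n, ‖w.2 i‖ ^ (2 * p i.succ)) /
        (c + ‖w.1‖ ^ 2 + ∑ i, ‖w.2 i‖ ^ 2) ^ (∑ i : Fin n, p i.succ + n + 1 + k))
    -- the integral over the last `n` coordinates is the `n`-dimensional case with `c + ‖x‖ ^ 2`
    have hsection : ∀ x : ℂ, Integrable (fun y => G (x, y)) ∧ ∫ y, G (x, y) =
        Real.pi ^ n * (∏ i : Fin n, ((p i.succ)! : ℝ)) * k ! / (∑ i : Fin n, p i.succ + n + k)! *
          (‖x‖ ^ (2 * p 0) / (c + ‖x‖ ^ 2) ^ (p 0 + j + 2)) := by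
      intro x
      obtain ⟨hint, hval⟩ := ih (fun i => p i.succ) k (c := c + ‖x‖ ^ 2) (by positivity)
      refine ⟨hint.const_mul (‖x‖ ^ (2 * p 0)), ?_⟩
      simp only [G]
      rw [integral_const_mul, hval, show k + 1 = p 0 + j + 2 by omega]
      field_simp
    obtain ⟨hint₀, hval₀⟩ := Complex.integrable_and_integral_norm_pow_div_add_sq_pow hc (p 0) j
    obtain ⟨hG, hGval⟩ := integrable_and_integral_prod_of_nonneg (by fun_prop)
      (fun w => by positivity) (.of_forall hsection) (hint₀.const_mul _)
    have hcons : ∀ w : ℂ × (Fin n → ℂ),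
        (∏ i, ‖(Fin.cons w.1 w.2 : Fin (n + 1) → ℂ) i‖ ^ (2 * p i)) /
          (c + ∑ i, ‖(Fin.cons w.1 w.2 : Fin (n + 1) → ℂ) i‖ ^ 2) ^ (∑ i, p i + (n + 1) + 1 + j) =
        G w := by
      intro w
      simp only [G, Fin.prod_univ_succ, Fin.sum_univ_succ, Fin.cons_zero, Fin.cons_succ, k]
      rw [← add_assoc, mul_div_assoc]
      ring_nf
    refine integrable_and_integral_of_comp_cons ⟨?_, ?_⟩ <;> simp only [hcons]
    · exact hG
    · rw [hGval, integral_const_mul, hval₀, Fin.prod_univ_succ, pow_succ,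
        show ∑ i : Fin n, p i.succ + n + k = ∑ i, p i + (n + 1) + j by
          rw [Fin.sum_univ_succ]; omega,
        show k = p 0 + j + 1 by omega]
      field_simp
      ring

theorem prod_pow_mul_prod_conj_pow {ι : Type*} [Fintype ι] (p : ι → ℕ) (z : ι → ℂ) :
    (∏ i, z i ^ p i) * (∏ i, conj (z i) ^ p i) = ((∏ i, ‖z i‖ ^ (2 * p i) : ℝ) : ℂ) := by
  rw [← Finset.prod_mul_distrib, Complex.ofReal_prod]
  refine Finset.prod_congr rfl fun i _ => ?_
  rw [← mul_pow, Complex.mul_conj', pow_mul]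
  push_cast
  rfl

theorem prod_exp_mul_pow_mul_prod_conj_pow {ι : Type*} [Fintype ι] (p q : ι → ℕ) (θ : ι → ℝ)
    (z : ι → ℂ) :
    (∏ i, (Complex.exp (θ i * Complex.I) * z i) ^ p i) *
        (∏ i, conj (Complex.exp (θ i * Complex.I) * z i) ^ q i) =
      Complex.exp ((∑ i, ((p i : ℝ) - q i) * θ i : ℝ) * Complex.I) *
        ((∏ i, z i ^ p i) * (∏ i, conj (z i) ^ q i)) := by
  have hfactor : ∀ i, (Complex.exp (θ i * Complex.I) * z i) ^ p i *
      conj (Complex.exp (θ i * Complex.I) * z i) ^ q i =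
        Complex.exp ((((p i : ℝ) - q i) * θ i : ℝ) * Complex.I) *
          (z i ^ p i * conj (z i) ^ q i) := by
    intro i
    rw [map_mul, ← Complex.exp_conj, map_mul, Complex.conj_ofReal, Complex.conj_I, mul_pow,
      mul_pow, ← Complex.exp_nat_mul, ← Complex.exp_nat_mul,
      show ((((p i : ℝ) - q i) * θ i : ℝ) : ℂ) * Complex.I =
        p i * (θ i * Complex.I) + q i * (θ i * -Complex.I) by push_cast; ring, Complex.exp_add]
    ring
  rw [← Finset.prod_mul_distrib, Finset.prod_congr rfl fun i _ => hfactor i,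
    Finset.prod_mul_distrib, Finset.prod_mul_distrib, ← Complex.exp_sum, Complex.ofReal_sum,
    Finset.sum_mul]

theorem integral_smul_monomial_eq_exp_mul {ι : Type*} [Fintype ι] (p q : ι → ℕ)
    {h : (ι → ℂ) → ℝ}
    (hh : ∀ (θ : ι → ℝ) z, h (fun i => Complex.exp (θ i * Complex.I) * z i) = h z) (θ : ι → ℝ) :
    ∫ z : ι → ℂ, h z • ((∏ i, z i ^ p i) * (∏ i, conj (z i) ^ q i)) =
      Complex.exp ((∑ i, ((p i : ℝ) - q i) * θ i : ℝ) * Complex.I) *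
        ∫ z : ι → ℂ, h z • ((∏ i, z i ^ p i) * (∏ i, conj (z i) ^ q i)) := by
  let R : (ι → ℂ) ≃ᵐ (ι → ℂ) := MeasurableEquiv.piCongrRight fun i =>
    (rotation (Circle.exp (θ i))).toHomeomorph.toMeasurableEquiv
  have hR : MeasurePreserving R := measurePreserving_pi _ _ fun i =>
    (rotation (Circle.exp (θ i))).measurePreserving
  conv_lhs => rw [← hR.integral_comp']
  rw [← integral_const_mul]
  congr 1
  ext z
  have hRz : R z = fun i => Complex.exp (θ i * Complex.I) * z i := by
    ext i
    rw [← Circle.coe_exp, ← rotation_apply]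
    rfl
  rw [hRz, hh, prod_exp_mul_pow_mul_prod_conj_pow, mul_smul_comm]

theorem integral_smul_monomial_eq_zero_of_ne {ι : Type*} [Fintype ι] {p q : ι → ℕ} (hpq : p ≠ q)
    {h : (ι → ℂ) → ℝ}
    (hh : ∀ (θ : ι → ℝ) z, h (fun i => Complex.exp (θ i * Complex.I) * z i) = h z) :
    ∫ z : ι → ℂ, h z • ((∏ i, z i ^ p i) * (∏ i, conj (z i) ^ q i)) = 0 := by
  classical
  obtain ⟨j, hj⟩ := Function.ne_iff.1 hpq
  have hj' : (p j : ℝ) - q j ≠ 0 := sub_ne_zero.2 (by exact_mod_cast hj)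
  -- rotating the `j`-th coordinate by `π / (p j - q j)` multiplies the integral by `-1`
  have hrot := integral_smul_monomial_eq_exp_mul p q hh (Pi.single j (Real.pi / (p j - q j)))
  have hangle :
      ∑ i, ((p i : ℝ) - q i) * Pi.single (M := fun _ => ℝ) j (Real.pi / (p j - q j)) i =
        Real.pi := by
    simp only [Pi.single_apply, mul_ite, mul_zero, Finset.sum_ite_eq', Finset.mem_univ, if_true]
    field_simp
  rw [hangle, Complex.exp_pi_mul_I] at hrot
  linear_combination hrot / 2

theorem integral_nu (n m : ℕ) (g : (Fin n → ℂ) → ℂ) :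
    ∫ z, g z ∂nu n m = (((n + m)! : ℝ) / (Real.pi ^ n * m !)) •
      ∫ z, ((1 + ∑ j, ‖z j‖ ^ 2) ^ (n + m + 1))⁻¹ • g z := by
  rw [nu, integral_withDensity_eq_integral_toReal_smul (by fun_prop)
    (.of_forall fun _ => ENNReal.ofReal_lt_top), ← integral_smul]
  refine integral_congr_ae (.of_forall fun z => ?_)
  dsimp only
  rw [ENNReal.toReal_ofReal (by positivity), smul_smul]

theorem integral_monomial_nu {n m : ℕ} {p : Fin n → ℕ} (hp : ∑ j, p j ≤ m) (q : Fin n → ℕ) :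
    (∫ z : Fin n → ℂ, (∏ j, z j ^ p j) * (∏ j, conj (z j) ^ q j) ∂(nu n m)) =
      if p = q then (((∏ j, (p j)!) * (m - ∑ j, p j)! : ℕ) : ℂ) / (m ! : ℂ) else 0 := by
  rw [integral_nu]
  split_ifs with hpq
  · subst hpq
    obtain ⟨j, rfl⟩ := Nat.exists_eq_add_of_le hp
    have hintegrand : ∀ z : Fin n → ℂ, ((1 + ∑ i, ‖z i‖ ^ 2) ^ (n + (∑ i, p i + j) + 1))⁻¹ •
        ((∏ i, z i ^ p i) * (∏ i, conj (z i) ^ p i)) =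
          (((∏ i, ‖z i‖ ^ (2 * p i)) / (1 + ∑ i, ‖z i‖ ^ 2) ^ (∑ i, p i + n + 1 + j) : ℝ) : ℂ) := by
      intro z
      rw [prod_pow_mul_prod_conj_pow, Complex.real_smul, ← Complex.ofReal_mul, inv_mul_eq_div,
        show n + (∑ i, p i + j) + 1 = ∑ i, p i + n + 1 + j by ring]
    rw [integral_congr_ae (.of_forall hintegrand), integral_complex_ofReal,
      (integrable_and_integral_prod_norm_pow_div_add_sum_sq_pow n p j one_pos).2,
      Nat.add_sub_cancel_left, show n + (∑ i, p i + j) = ∑ i, p i + n + j by ring]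
    have hfac : ((∑ i, p i + n + j)! : ℂ) ≠ 0 := Nat.cast_ne_zero.2 (Nat.factorial_ne_zero _)
    rw [Complex.real_smul]
    push_cast
    field_simp
    ring
  · rw [integral_smul_monomial_eq_zero_of_ne hpq fun θ z => ?_, smul_zero]
    simp only [norm_mul, Complex.norm_exp_ofReal_mul_I, one_mul]

theorem stmt2_general (n m : ℕ) (p q : Fin n → ℕ)
    (hp : ∑ j, p j ≤ m) :
    (∫ z : Fin n → ℂ, (∏ j, z j ^ p j) * (∏ j, (starRingEnd ℂ) (z j) ^ q j) ∂(nu n m)) =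
      (if p = q then
        (((∏ j, (p j).factorial) * (m - ∑ j, p j).factorial : ℕ) : ℂ) / (m.factorial : ℂ)
      else 0) ∧
    (∫ z : Fin n → ℂ,
        ((Real.sqrt ((m.factorial : ℝ) /
            ((∏ j, (p j).factorial) * (m - ∑ j, p j).factorial)) : ℂ) * ∏ j, z j ^ p j) *
          (starRingEnd ℂ) ((Real.sqrt ((m.factorial : ℝ) /
            ((∏ j, (q j).factorial) * (m - ∑ j, q j).factorial)) : ℂ) * ∏ j, z j ^ q j)
        ∂(nu n m)) = if p = q then 1 else 0 := by
  have hmoment := integral_monomial_nu (m := m) hp q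
  refine ⟨hmoment, ?_⟩
  have hscalar : ∀ (a b : ℝ) (z : Fin n → ℂ),
      ((a : ℂ) * ∏ j, z j ^ p j) * conj ((b : ℂ) * ∏ j, z j ^ q j) =
        ((a * b : ℝ) : ℂ) * ((∏ j, z j ^ p j) * ∏ j, conj (z j) ^ q j) := by
    intro a b z
    simp only [map_mul, map_prod, map_pow, Complex.conj_ofReal, Complex.ofReal_mul]
    ring
  simp only [hscalar]
  rw [integral_const_mul, hmoment]
  split_ifs with hpq
  · subst hpq
    rw [Real.mul_self_sqrt (by positivity)]
    have hm : (m ! : ℂ) ≠ 0 := Nat.cast_ne_zero.2 m.factorial_ne_zero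
    have hP : (((∏ j, (p j)!) * (m - ∑ j, p j)! : ℕ) : ℂ) ≠ 0 := Nat.cast_ne_zero.2 (by positivity)
    push_cast at hP ⊢
    field_simp
    exact div_self hP
  · rw [mul_zero]

/-- For `p, q ∈ J_n(m)`, `∫ z^p conj(z)^q dν_m = p!(m−|p|)!/m!` if `p = q` and `0` otherwise;
consequently the normalized monomials `(m!/(p!(m−|p|)!))^{1/2} z^p` form an orthonormal family
in `L²(ℂⁿ, ν_m)`. -/
theorem stmt2 (n m : ℕ) (hn : 1 ≤ n) (p q : Fin n → ℕ)
    (hp : ∑ j, p j ≤ m) (hq : ∑ j, q j ≤ m) :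
    (∫ z : Fin n → ℂ, (∏ j, z j ^ p j) * (∏ j, (starRingEnd ℂ) (z j) ^ q j) ∂(nu n m)) =
      (if p = q then
        (((∏ j, (p j).factorial) * (m - ∑ j, p j).factorial : ℕ) : ℂ) / (m.factorial : ℂ)
      else 0) ∧
    (∫ z : Fin n → ℂ,
        ((Real.sqrt ((m.factorial : ℝ) /
            ((∏ j, (p j).factorial) * (m - ∑ j, p j).factorial)) : ℂ) * ∏ j, z j ^ p j) *
          (starRingEnd ℂ) ((Real.sqrt ((m.factorial : ℝ) /
            ((∏ j, (q j).factorial) * (m - ∑ j, q j).factorial)) : ℂ) * ∏ j, z j ^ q j)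
        ∂(nu n m)) = if p = q then 1 else 0 :=
  stmt2_general n m p q hp
end

section
/- For a multi-index p ∈ ℕⁿ, the monomial z^p belongs to L²(ℂⁿ, ν_m), i.e. ∫_{ℂⁿ} |z^p|² dν_m(z) < ∞, if and only if |p| ≤ m. -/
/-!
Since `‖z_j‖² ≤ 1 + |z|²`, the integrand `|z^p|² (1 + |z|²)^(-(n+m+1))` is at most
`(1 + |z|²)^(|p|-n-m-1)`, which is integrable on `ℂⁿ ≅ ℝ^(2n)` as soon as `|p| ≤ m`.
Conversely, let `A` be the product of the annuli `1 < |w| < 2`. On the dyadic shell `2^k • A`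
the integrand is at least a constant times `4^(k(|p|-n-m-1))`, while the shell has volume
`4^(kn) vol(A)`; when `|p| > m` every shell contributes a fixed positive amount, and the shells
are disjoint.
-/

open MeasureTheory

open Module
open scoped ENNReal Pointwise

section Dyadic

variable {E : Type*} [NormedAddCommGroup E] [NormedSpace ℝ E]

theorem norm_mem_Ico_of_mem_two_pow_smul {A : Set E} (hA : ∀ x ∈ A, 1 ≤ ‖x‖ ∧ ‖x‖ < 2) (k : ℕ)
    {y : E} (hy : y ∈ (2 : ℝ) ^ k • A) : (2 : ℝ) ^ k ≤ ‖y‖ ∧ ‖y‖ < 2 ^ (k + 1) := by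
  obtain ⟨x, hx, rfl⟩ := hy
  rw [norm_smul, Real.norm_of_nonneg (by positivity), pow_succ]
  constructor <;> nlinarith [hA x hx, pow_pos (two_pos (α := ℝ)) k]

theorem pairwise_disjoint_two_pow_smul {A : Set E} (hA : ∀ x ∈ A, 1 ≤ ‖x‖ ∧ ‖x‖ < 2) :
    Pairwise (Function.onFun Disjoint fun k : ℕ => (2 : ℝ) ^ k • A) := by
  refine (pairwise_disjoint_on _).2 fun k l hkl => Set.disjoint_left.2 fun y hyk hyl => ?_
  have h : (2 : ℝ) ^ (k + 1) ≤ 2 ^ l := pow_le_pow_right₀ one_le_two hkl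
  linarith [(norm_mem_Ico_of_mem_two_pow_smul hA k hyk).2,
    (norm_mem_Ico_of_mem_two_pow_smul hA l hyl).1]

/-- Each dyadic shell `2 ^ k • A` contributes at least `c * μ A` to the integral. -/
theorem lintegral_eq_top_of_le_mul_two_pow [MeasurableSpace E] [BorelSpace E]
    [FiniteDimensional ℝ E] (μ : Measure E) [μ.IsAddHaarMeasure] {A : Set E}
    (hA : MeasurableSet A) (hμA : μ A ≠ 0) (hA_norm : ∀ x ∈ A, 1 ≤ ‖x‖ ∧ ‖x‖ < 2)
    {c : ℝ≥0∞} (hc : c ≠ 0) {f : E → ℝ≥0∞}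
    (hf : ∀ k : ℕ, ∀ x ∈ A, c ≤ f ((2 : ℝ) ^ k • x) * 2 ^ (k * finrank ℝ E)) :
    ∫⁻ x, f x ∂μ = ∞ := by
  set B : ℕ → Set E := fun k => (2 : ℝ) ^ k • A
  have hB : ∀ k, MeasurableSet (B k) := fun k => hA.const_smul₀ _
  have hshell : ∀ k, c * μ A ≤ ∫⁻ x in B k, f x ∂μ := by
    intro k
    have hpow : (2 : ℝ≥0∞) ^ (k * finrank ℝ E) ≠ 0 := pow_ne_zero _ two_ne_zero
    have hpow' : (2 : ℝ≥0∞) ^ (k * finrank ℝ E) ≠ ∞ := ENNReal.pow_ne_top ENNReal.ofNat_ne_top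
    have hμB : μ (B k) = 2 ^ (k * finrank ℝ E) * μ A := by
      rw [Measure.addHaar_smul, ← pow_mul, abs_of_nonneg (by positivity),
        ENNReal.ofReal_pow zero_le_two, ENNReal.ofReal_ofNat]
    calc c * μ A = c / 2 ^ (k * finrank ℝ E) * μ (B k) := by
          rw [hμB, ← mul_assoc, ENNReal.div_mul_cancel hpow hpow']
      _ = ∫⁻ _ in B k, c / 2 ^ (k * finrank ℝ E) ∂μ := (setLIntegral_const _ _).symm
      _ ≤ ∫⁻ x in B k, f x ∂μ := by
        refine lintegral_mono_ae (ae_restrict_of_forall_mem (hB k) ?_)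
        rintro _ ⟨x, hx, rfl⟩
        exact ENNReal.div_le_of_le_mul (hf k x hx)
  rw [← top_le_iff]
  calc ∞ = ∑' _ : ℕ, c * μ A := (ENNReal.tsum_const_eq_top_of_ne_zero (mul_ne_zero hc hμA)).symm
    _ ≤ ∑' k, ∫⁻ x in B k, f x ∂μ := ENNReal.tsum_le_tsum hshell
    _ = ∫⁻ x in ⋃ k, B k, f x ∂μ :=
      (lintegral_iUnion hB (pairwise_disjoint_two_pow_smul hA_norm) _).symm
    _ ≤ ∫⁻ x, f x ∂μ := setLIntegral_le_lintegral _ _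

end Dyadic

theorem finrank_real_fin_complex (n : ℕ) : finrank ℝ (Fin n → ℂ) = 2 * n := by
  simp [Module.finrank_pi_fintype, Complex.finrank_real_complex, mul_comm]

theorem sq_norm_le_sum_sq_norm {ι : Type*} [Fintype ι] {G : ι → Type*}
    [∀ i, SeminormedAddGroup (G i)] (x : ∀ i, G i) : ‖x‖ ^ 2 ≤ ∑ i, ‖x i‖ ^ 2 := by
  have hsum : 0 ≤ ∑ i, ‖x i‖ ^ 2 := Finset.sum_nonneg fun i _ => sq_nonneg _
  rw [← Real.le_sqrt (norm_nonneg _) hsum, pi_norm_le_iff_of_nonneg (Real.sqrt_nonneg _)]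
  exact fun i => Real.le_sqrt_of_sq_le
    (Finset.single_le_sum (fun j _ => sq_nonneg ‖x j‖) (Finset.mem_univ i))

section Monomial

variable {ι : Type*} [Fintype ι] (p : ι → ℕ)

theorem sq_norm_monomial (z : ι → ℂ) : ‖∏ j, z j ^ p j‖ ^ 2 = ∏ j, (‖z j‖ ^ 2) ^ p j := by
  simp only [norm_prod, norm_pow, ← Finset.prod_pow, ← pow_mul, mul_comm]

theorem sq_norm_monomial_le {z : ι → ℂ} {b : ℝ} (h : ∀ j, ‖z j‖ ^ 2 ≤ b) :
    ‖∏ j, z j ^ p j‖ ^ 2 ≤ b ^ ∑ j, p j := by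
  rw [sq_norm_monomial, ← Finset.prod_pow_eq_pow_sum]
  exact Finset.prod_le_prod (fun j _ => by positivity) fun j _ =>
    pow_le_pow_left₀ (sq_nonneg _) (h j) _

theorem le_sq_norm_monomial {z : ι → ℂ} {a : ℝ} (ha : 0 ≤ a) (h : ∀ j, a ≤ ‖z j‖ ^ 2) :
    a ^ ∑ j, p j ≤ ‖∏ j, z j ^ p j‖ ^ 2 := by
  rw [sq_norm_monomial, ← Finset.prod_pow_eq_pow_sum]
  exact Finset.prod_le_prod (fun j _ => by positivity) fun j _ => pow_le_pow_left₀ ha (h j) _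

end Monomial

theorem one_le_one_add_sum_sq_norm {ι : Type*} [Fintype ι] (z : ι → ℂ) :
    1 ≤ 1 + ∑ j, ‖z j‖ ^ 2 :=
  le_add_of_nonneg_right (Finset.sum_nonneg fun _ _ => sq_nonneg _)

theorem lintegral_inv_one_add_sum_sq_norm_pow_lt_top {n k : ℕ} (hk : n < k) :
    ∫⁻ z : Fin n → ℂ, ENNReal.ofReal (((1 + ∑ j, ‖z j‖ ^ 2) ^ k)⁻¹) < ∞ := by
  have hdim : (finrank ℝ (Fin n → ℂ) : ℝ) < (2 * k : ℕ) := by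
    rw [finrank_real_fin_complex]; exact_mod_cast by omega
  refine lt_of_le_of_lt (lintegral_mono fun z => ENNReal.ofReal_le_ofReal ?_)
    (integrable_rpow_neg_one_add_norm_sq (μ := volume) hdim).lintegral_lt_top
  rw [show (-(2 * k : ℕ) / 2 : ℝ) = -(k : ℝ) by push_cast; ring,
    Real.rpow_neg (by positivity), Real.rpow_natCast]
  gcongr
  exact sq_norm_le_sum_sq_norm z

theorem lintegral_sq_norm_monomial_mul_lt_top {n N : ℕ} (p : Fin n → ℕ)
    (hN : n + ∑ j, p j < N) :
    ∫⁻ z : Fin n → ℂ, ENNReal.ofReal (‖∏ j, z j ^ p j‖ ^ 2 * ((1 + ∑ j, ‖z j‖ ^ 2) ^ N)⁻¹)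
      < ∞ := by
  refine lt_of_le_of_lt (lintegral_mono fun z => ENNReal.ofReal_le_ofReal ?_)
    (lintegral_inv_one_add_sum_sq_norm_pow_lt_top (k := N - ∑ j, p j) (by omega))
  set Q := 1 + ∑ j, ‖z j‖ ^ 2
  have hQ : 0 < Q := zero_lt_one.trans_le (one_le_one_add_sum_sq_norm z)
  have hle : ‖∏ j, z j ^ p j‖ ^ 2 ≤ Q ^ ∑ j, p j :=
    sq_norm_monomial_le p fun j => le_add_of_nonneg_of_le zero_le_one
      (Finset.single_le_sum (fun i _ => sq_nonneg ‖z i‖) (Finset.mem_univ j))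
  calc ‖∏ j, z j ^ p j‖ ^ 2 * (Q ^ N)⁻¹ ≤ Q ^ (∑ j, p j) * (Q ^ N)⁻¹ := by gcongr
    _ = (Q ^ (N - ∑ j, p j))⁻¹ := by
      rw [← Nat.sub_add_cancel (show ∑ j, p j ≤ N by omega), pow_add, Nat.add_sub_cancel]
      field_simp

theorem inv_pow_le_sq_norm_monomial_mul {n N : ℕ} (p : Fin n → ℕ) (hN : N ≤ n + ∑ j, p j)
    {z : Fin n → ℂ} {t : ℝ} (ht : 1 ≤ t) (hz : ∀ j, t ≤ ‖z j‖ ^ 2 ∧ ‖z j‖ ^ 2 ≤ 4 * t) :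
    ((1 + 4 * n : ℝ) ^ N)⁻¹ ≤ ‖∏ j, z j ^ p j‖ ^ 2 * ((1 + ∑ j, ‖z j‖ ^ 2) ^ N)⁻¹ * t ^ n := by
  have ht0 : 0 < t := zero_lt_one.trans_le ht
  have hmono : t ^ ∑ j, p j ≤ ‖∏ j, z j ^ p j‖ ^ 2 :=
    le_sq_norm_monomial p ht0.le fun j => (hz j).1
  have hsum : 1 + ∑ j, ‖z j‖ ^ 2 ≤ (1 + 4 * n) * t := by
    calc 1 + ∑ j, ‖z j‖ ^ 2 ≤ t + ∑ _j : Fin n, 4 * t :=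
          add_le_add ht (Finset.sum_le_sum fun j _ => (hz j).2)
      _ = (1 + 4 * n) * t := by
        rw [Finset.sum_const, Finset.card_univ, Fintype.card_fin, nsmul_eq_mul]
        ring
  calc ((1 + 4 * n : ℝ) ^ N)⁻¹
      ≤ ((1 + 4 * n : ℝ) ^ N)⁻¹ * (t ^ (∑ j, p j + n) / t ^ N) := by
        refine le_mul_of_one_le_right (by positivity) ?_
        rw [one_le_div (by positivity)]
        exact pow_le_pow_right₀ ht (by omega)
    _ = t ^ (∑ j, p j) * (((1 + 4 * n) * t) ^ N)⁻¹ * t ^ n := by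
        rw [pow_add, mul_pow]
        field_simp
    _ ≤ ‖∏ j, z j ^ p j‖ ^ 2 * ((1 + ∑ j, ‖z j‖ ^ 2) ^ N)⁻¹ * t ^ n := by
        have hQ := one_le_one_add_sum_sq_norm z
        gcongr

theorem lintegral_sq_norm_monomial_mul_eq_top {n N : ℕ} (p : Fin n → ℕ) (hn : 0 < n)
    (hN : N ≤ n + ∑ j, p j) :
    ∫⁻ z : Fin n → ℂ, ENNReal.ofReal (‖∏ j, z j ^ p j‖ ^ 2 * ((1 + ∑ j, ‖z j‖ ^ 2) ^ N)⁻¹)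
      = ∞ := by
  set A : Set (Fin n → ℂ) := Set.univ.pi fun _ => norm ⁻¹' Set.Ioo 1 2
  have hA : IsOpen A :=
    isOpen_set_pi Set.finite_univ fun _ _ => isOpen_Ioo.preimage continuous_norm
  have hA_ne : A.Nonempty := ⟨fun _ => 3 / 2, fun _ _ => by norm_num [Set.mem_Ioo]⟩
  have hA_coord : ∀ x ∈ A, ∀ j, 1 < ‖x j‖ ∧ ‖x j‖ < 2 := fun x hx j => hx j (Set.mem_univ j)
  refine lintegral_eq_top_of_le_mul_two_pow volume hA.measurableSet (hA.measure_ne_zero _ hA_ne)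
    (fun x hx => ⟨(hA_coord x hx ⟨0, hn⟩).1.le.trans (norm_le_pi_norm x _),
      (pi_norm_lt_iff two_pos).2 fun j => (hA_coord x hx j).2⟩)
    (c := ENNReal.ofReal ((1 + 4 * n : ℝ) ^ N)⁻¹) (ENNReal.ofReal_pos.2 (by positivity)).ne'
    fun k x hx => ?_
  have hz : ∀ j, (4 : ℝ) ^ k ≤ ‖((2 : ℝ) ^ k • x) j‖ ^ 2 ∧
      ‖((2 : ℝ) ^ k • x) j‖ ^ 2 ≤ 4 * 4 ^ k := by
    intro j
    obtain ⟨h1, h2⟩ := hA_coord x hx j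
    rw [Pi.smul_apply, norm_smul, Real.norm_of_nonneg (by positivity), mul_pow, ← pow_mul,
      mul_comm k, pow_mul, show (2 : ℝ) ^ 2 = 4 by norm_num]
    have h4 : (0 : ℝ) < 4 ^ k := by positivity
    have hsq : 1 ≤ ‖x j‖ ^ 2 ∧ ‖x j‖ ^ 2 ≤ 4 := ⟨by nlinarith, by nlinarith⟩
    constructor <;> nlinarith
  have key := ENNReal.ofReal_le_ofReal
    (inv_pow_le_sq_norm_monomial_mul p hN (one_le_pow₀ (by norm_num)) hz)
  rw [ENNReal.ofReal_mul (by positivity), ENNReal.ofReal_pow (by positivity),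
    ENNReal.ofReal_pow (by positivity), ENNReal.ofReal_ofNat, ← pow_mul] at key
  rwa [finrank_real_fin_complex, mul_left_comm, pow_mul, show (2 : ℝ≥0∞) ^ 2 = 4 by norm_num]

theorem lintegral_nu_lt_top_iff {n m : ℕ} (g : (Fin n → ℂ) → ℝ) :
    ∫⁻ z, ENNReal.ofReal (g z) ∂nu n m < ∞ ↔
      ∫⁻ z, ENNReal.ofReal (g z * ((1 + ∑ j, ‖z j‖ ^ 2) ^ (n + m + 1))⁻¹) < ∞ := by
  have hC : 0 < ((n + m).factorial : ℝ) / (Real.pi ^ n * m.factorial) := by positivity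
  rw [nu, lintegral_withDensity_eq_lintegral_mul_non_measurable _ (by fun_prop)
    (.of_forall fun _ => ENNReal.ofReal_lt_top)]
  have hweight : ∀ z : Fin n → ℂ, 0 ≤ ((1 + ∑ j, ‖z j‖ ^ 2) ^ (n + m + 1))⁻¹ := fun z => by
    positivity
  simp_rw [Pi.mul_apply, ENNReal.ofReal_mul hC.le, mul_assoc,
    ← ENNReal.ofReal_mul (hweight _), mul_comm _ (g _)]
  rw [lintegral_const_mul' _ _ ENNReal.ofReal_ne_top]
  simp [lt_top_iff_ne_top, ENNReal.mul_eq_top, hC]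

theorem stmt3_general (n m : ℕ) (p : Fin n → ℕ) :
    (∫⁻ z : Fin n → ℂ,
        ENNReal.ofReal (‖∏ j, z j ^ p j‖ ^ 2) ∂(nu n m)) < ⊤ ↔
      ∑ j, p j ≤ m := by
  rw [lintegral_nu_lt_top_iff]
  constructor
  · intro hfin
    by_contra! hm
    have hn : 0 < n := Nat.pos_of_ne_zero fun h => by subst h; simp at hm
    exact (lintegral_sq_norm_monomial_mul_eq_top p hn (by omega)).not_lt hfin
  · intro hle
    exact lintegral_sq_norm_monomial_mul_lt_top p (by omega)

/-- The monomial `z^p` belongs to `L²(ℂⁿ, ν_m)`, i.e. `∫ |z^p|² dν_m < ∞`,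
if and only if `|p| ≤ m`. -/
theorem stmt3 (n m : ℕ) (hn : 1 ≤ n) (p : Fin n → ℕ) :
    (∫⁻ z : Fin n → ℂ,
        ENNReal.ofReal (‖∏ j, z j ^ p j‖ ^ 2) ∂(nu n m)) < ⊤ ↔
      ∑ j, p j ≤ m :=
  stmt3_general n m p
end

section
/- A(n) is a maximal Abelian subgroup of PSU(n+1): if H is a subgroup of PSU(n+1) that is commutative, connected in the subspace topology, and contains A(n), then H = A(n). -/
/-- `SU(n+1)`: the topological group of `(n+1)×(n+1)` complex unitary matrices with
determinant `1`, as a subgroup of the unitary group. -/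
def SU (n : ℕ) : Subgroup (Matrix.unitaryGroup (Fin (n + 1)) ℂ) where
  carrier := {A | (A : Matrix (Fin (n + 1)) (Fin (n + 1)) ℂ).det = 1}
  one_mem' := by simp
  mul_mem' := by
    intro A B hA hB
    simp only [Set.mem_setOf_eq, Submonoid.coe_mul, Matrix.det_mul] at *
    rw [hA, hB, one_mul]
  inv_mem' := by
    intro A hA
    simp only [Set.mem_setOf_eq] at *
    have h : ((A⁻¹ : Matrix.unitaryGroup (Fin (n + 1)) ℂ) :
        Matrix (Fin (n + 1)) (Fin (n + 1)) ℂ) =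
        star (A : Matrix (Fin (n + 1)) (Fin (n + 1)) ℂ) := by
      rw [← Unitary.star_eq_inv]
      rfl
    rw [h, Matrix.star_eq_conjTranspose, Matrix.det_conjTranspose, hA, star_one]

/-- `Â(n)`: the subgroup of diagonal matrices in `SU(n+1)`. -/
def Ahat (n : ℕ) : Subgroup (SU n) where
  carrier := {A | (A.1.1 : Matrix (Fin (n + 1)) (Fin (n + 1)) ℂ).IsDiag}
  one_mem' := Matrix.isDiag_one
  mul_mem' := by
    intro A B hA hB i j hij
    show (A.1.1 * B.1.1) i j = 0
    rw [Matrix.mul_apply]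
    apply Finset.sum_eq_zero
    intro k _
    by_cases hk : i = k
    · rw [← hk, hB hij, mul_zero]
    · rw [hA (by exact hk), zero_mul]
  inv_mem' := by
    intro A hA
    show ((A⁻¹ : SU n).1.1).IsDiag
    have h : (A⁻¹ : SU n).1.1 = star (A.1.1) :=
      calc (A⁻¹ : SU n).1.1 = (((A.1)⁻¹ : Matrix.unitaryGroup (Fin (n + 1)) ℂ) :
            Matrix (Fin (n + 1)) (Fin (n + 1)) ℂ) := rfl
        _ = ((star (A.1) : Matrix.unitaryGroup (Fin (n + 1)) ℂ) :
            Matrix (Fin (n + 1)) (Fin (n + 1)) ℂ) := by rw [Unitary.star_eq_inv]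
        _ = star (A.1.1) := rfl
    rw [h, Matrix.star_eq_conjTranspose]
    exact hA.conjTranspose

/-- The central subgroup `Z = {ζ·I : ζ^{n+1} = 1}` of `SU(n+1)`. -/
def Zc (n : ℕ) : Subgroup (SU n) where
  carrier := {A | ∃ ζ : ℂ, ζ ^ (n + 1) = 1 ∧
    A.1.1 = ζ • (1 : Matrix (Fin (n + 1)) (Fin (n + 1)) ℂ)}
  one_mem' := ⟨1, one_pow _, by simp⟩
  mul_mem' := by
    rintro A B ⟨ζ, hζ, hA⟩ ⟨ξ, hξ, hB⟩
    refine ⟨ζ * ξ, by rw [mul_pow, hζ, hξ, one_mul], ?_⟩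
    show A.1.1 * B.1.1 = _
    rw [hA, hB, smul_mul_smul_comm, one_mul]
  inv_mem' := by
    rintro A ⟨ζ, hζ, hA⟩
    refine ⟨star ζ, by rw [← star_pow, hζ, star_one], ?_⟩
    have h : (A⁻¹ : SU n).1.1 = star (A.1.1) :=
      calc (A⁻¹ : SU n).1.1 = (((A.1)⁻¹ : Matrix.unitaryGroup (Fin (n + 1)) ℂ) :
            Matrix (Fin (n + 1)) (Fin (n + 1)) ℂ) := rfl
        _ = ((star (A.1) : Matrix.unitaryGroup (Fin (n + 1)) ℂ) :
            Matrix (Fin (n + 1)) (Fin (n + 1)) ℂ) := by rw [Unitary.star_eq_inv]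
        _ = star (A.1.1) := rfl
    rw [h, hA, star_smul, star_one]

instance Zc_normal (n : ℕ) : (Zc n).Normal := by
  constructor
  rintro A ⟨ζ, hζ, hA⟩ g
  refine ⟨ζ, hζ, ?_⟩
  show g.1.1 * A.1.1 * (g⁻¹ : SU n).1.1 = ζ • 1
  have h1 : g.1.1 * (g⁻¹ : SU n).1.1 = 1 :=
    congrArg (fun B : SU n => B.1.1) (mul_inv_cancel g)
  rw [hA, mul_smul_comm, smul_mul_assoc, mul_one, h1]

/-- `PSU(n+1) = SU(n+1)/Z`, as a quotient topological group. -/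
abbrev PSU (n : ℕ) := SU n ⧸ Zc n

/-- The quotient homomorphism `λ : SU(n+1) → PSU(n+1)`. -/
noncomputable def lam (n : ℕ) : SU n →* PSU n := QuotientGroup.mk' (Zc n)

/-- `A(n) = λ(Â(n))`, the image in `PSU(n+1)` of the diagonal subgroup of `SU(n+1)`. -/
noncomputable def An (n : ℕ) : Subgroup (PSU n) := (Ahat n).map (lam n)

/-!
Let `D = diag(exp(iθ₀), …, exp(iθₙ))` with `θₖ = (2k - n)/(n + 1)`. The angles sum to `0`, are
distinct and lie in `(-π/2, π/2)`, so `D ∈ Â(n)`, its entries are distinct and `Re (tr D) > 0`.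
If `λ(g)` commutes with `λ(D)` then `D G = ζ • G D` for some scalar `ζ`; taking traces of
`D = ζ • G D G⁻¹` gives `ζ = 1` because `tr D ≠ 0`. So `G` commutes with a diagonal matrix with
distinct entries, hence is diagonal, i.e. `λ(g) ∈ A(n)`.
-/

namespace Matrix

variable {ι R : Type*} [Fintype ι] [DecidableEq ι]

theorem isDiag_of_commute_diagonal [CommRing R] [NoZeroDivisors R] {v : ι → R}
    (hv : Function.Injective v) {G : Matrix ι ι R} (h : Commute G (diagonal v)) : G.IsDiag := by
  intro i j hij
  have hij' : G i j * (v j - v i) = 0 := by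
    have := congr_fun₂ h.eq i j
    rw [mul_diagonal, diagonal_mul] at this
    linear_combination this
  exact (mul_eq_zero.mp hij').resolve_right (sub_ne_zero.mpr fun h => hij (hv h).symm)

theorem eq_one_of_mul_eq_smul_mul [CommRing R] [NoZeroDivisors R] {D G : Matrix ι ι R} {c : R}
    (hG : IsUnit G) (h : D * G = c • (G * D)) (hD : D.trace ≠ 0) : c = 1 := by
  obtain ⟨u, rfl⟩ := hG
  have hconj : D = c • (u.val * D * u.inv) := by
    rw [← smul_mul_assoc, ← h, mul_assoc, u.val_inv, mul_one]
  have htrace : D.trace = c * D.trace := by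
    conv_lhs => rw [hconj]
    rw [trace_smul, smul_eq_mul, mul_assoc, trace_mul_comm, mul_assoc, u.inv_val, mul_one]
  exact (mul_left_eq_self₀.mp htrace.symm).resolve_right hD

theorem diagonal_mem_unitaryGroup [CommRing R] [StarRing R] {d : ι → R}
    (hd : ∀ i, star (d i) * d i = 1) : diagonal d ∈ unitaryGroup ι R := by
  rw [mem_unitaryGroup_iff', star_eq_conjTranspose, diagonal_conjTranspose,
    diagonal_mul_diagonal, ← diagonal_one]
  exact congrArg diagonal (funext hd)

end Matrix

section RegularDiagonal

open Complex

noncomputable def diagAngle (n : ℕ) (k : Fin (n + 1)) : ℝ := (2 * k - n) / (n + 1)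

lemma abs_diagAngle_le_one (n : ℕ) (k : Fin (n + 1)) : |diagAngle n k| ≤ 1 := by
  have hk : (k : ℝ) ≤ n := by exact_mod_cast Fin.is_le k
  rw [diagAngle, abs_div, abs_of_pos (by positivity : (0 : ℝ) < n + 1),
    div_le_one (by positivity), abs_le]
  constructor <;> linarith [(Nat.cast_nonneg k : (0 : ℝ) ≤ k)]

lemma diagAngle_injective (n : ℕ) : Function.Injective (diagAngle n) := by
  intro j k h
  rw [diagAngle, diagAngle, div_left_inj' (by positivity)] at h
  exact Fin.ext (by exact_mod_cast (by linarith : (j : ℝ) = k))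

lemma diagAngle_rev (n : ℕ) (k : Fin (n + 1)) : diagAngle n k.rev = -diagAngle n k := by
  have hk : (k.rev : ℝ) = n - k := by
    rw [Fin.val_rev, Nat.add_sub_add_right, Nat.cast_sub (Fin.is_le k)]
  rw [diagAngle, diagAngle, hk]
  ring

lemma sum_diagAngle (n : ℕ) : ∑ k, diagAngle n k = 0 := by
  have h := Equiv.sum_comp Fin.revPerm (diagAngle n)
  simp only [Fin.revPerm_apply, diagAngle_rev, Finset.sum_neg_distrib] at h
  linarith

noncomputable def diagEntry (n : ℕ) (k : Fin (n + 1)) : ℂ := exp (diagAngle n k * I)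

lemma star_diagEntry_mul_self (n : ℕ) (k : Fin (n + 1)) :
    star (diagEntry n k) * diagEntry n k = 1 := by
  rw [Complex.star_def, conj_mul', diagEntry, norm_exp_ofReal_mul_I, ofReal_one, one_pow]

lemma prod_diagEntry (n : ℕ) : ∏ k, diagEntry n k = 1 := by
  simp only [diagEntry]
  rw [← exp_sum, ← Finset.sum_mul, ← ofReal_sum, sum_diagAngle, ofReal_zero, zero_mul,
    exp_zero]

lemma diagEntry_injective (n : ℕ) : Function.Injective (diagEntry n) := by
  have hmem (k : Fin (n + 1)) : diagAngle n k ∈ Set.Icc (-(Real.pi / 2)) (Real.pi / 2) :=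
    abs_le.mp ((abs_diagAngle_le_one n k).trans (by linarith [Real.pi_gt_three]))
  intro j k h
  have hsin := congrArg im h
  simp only [diagEntry, exp_ofReal_mul_I_im] at hsin
  exact diagAngle_injective n (Real.injOn_sin (hmem j) (hmem k) hsin)

lemma sum_diagEntry_ne_zero (n : ℕ) : ∑ k, diagEntry n k ≠ 0 := by
  have hre : 0 < (∑ k, diagEntry n k).re := by
    rw [re_sum]
    refine Finset.sum_pos (fun k _ => ?_) Finset.univ_nonempty
    rw [diagEntry, exp_ofReal_mul_I_re]
    exact Real.cos_pos_of_mem_Ioo (abs_lt.mp ((abs_diagAngle_le_one n k).trans_lt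
      (by linarith [Real.pi_gt_three])))
  exact fun h => hre.ne' (by rw [h, zero_re])

end RegularDiagonal

noncomputable def regularDiag (n : ℕ) : SU n :=
  ⟨⟨Matrix.diagonal (diagEntry n), Matrix.diagonal_mem_unitaryGroup (star_diagEntry_mul_self n)⟩,
    show (Matrix.diagonal (diagEntry n)).det = 1 by rw [Matrix.det_diagonal, prod_diagEntry]⟩

lemma regularDiag_mem_Ahat (n : ℕ) : regularDiag n ∈ Ahat n :=
  Matrix.isDiag_diagonal (diagEntry n)

lemma isUnit_coe_SU {n : ℕ} (g : SU n) : IsUnit g.1.1 :=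
  (Matrix.isUnit_iff_isUnit_det _).mpr (g.2.symm ▸ isUnit_one)

lemma exists_smul_of_lam_commute {n : ℕ} {g h : SU n}
    (hc : lam n g * lam n h = lam n h * lam n g) :
    ∃ ζ : ℂ, h.1.1 * g.1.1 = ζ • (g.1.1 * h.1.1) := by
  rw [← map_mul, ← map_mul] at hc
  obtain ⟨ζ, -, hζ⟩ := QuotientGroup.eq.mp hc
  refine ⟨ζ, ?_⟩
  calc h.1.1 * g.1.1 = (g * h * ((g * h)⁻¹ * (h * g))).1.1 := by rw [mul_inv_cancel_left]; rfl
    _ = (g * h).1.1 * ((g * h)⁻¹ * (h * g)).1.1 := rfl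
    _ = ζ • (g.1.1 * h.1.1) := by rw [hζ, mul_smul_comm, mul_one]; rfl

lemma mem_Ahat_of_lam_commute_regularDiag {n : ℕ} {g : SU n}
    (hc : lam n g * lam n (regularDiag n) = lam n (regularDiag n) * lam n g) : g ∈ Ahat n := by
  obtain ⟨ζ, hζ⟩ := exists_smul_of_lam_commute hc
  have htrace : (Matrix.diagonal (diagEntry n)).trace ≠ 0 := by
    rw [Matrix.trace_diagonal]
    exact sum_diagEntry_ne_zero n
  obtain rfl : ζ = 1 := Matrix.eq_one_of_mul_eq_smul_mul (isUnit_coe_SU g) hζ htrace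
  rw [one_smul] at hζ
  exact Matrix.isDiag_of_commute_diagonal (diagEntry_injective n) hζ.symm

theorem stmt15_general (n : ℕ) (H : Subgroup (PSU n))
    (hcomm : ∀ x ∈ H, ∀ y ∈ H, x * y = y * x)
    (hA : An n ≤ H) : H = An n := by
  refine le_antisymm (fun x hx => ?_) hA
  obtain ⟨g, rfl⟩ := QuotientGroup.mk'_surjective (Zc n) x
  have hd : lam n (regularDiag n) ∈ H := hA ⟨regularDiag n, regularDiag_mem_Ahat n, rfl⟩
  exact ⟨g, mem_Ahat_of_lam_commute_regularDiag (hcomm _ hx _ hd), rfl⟩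

/-- `A(n)` is a maximal Abelian subgroup of `PSU(n+1)`: any commutative subgroup of
`PSU(n+1)` that is connected in the subspace topology and contains `A(n)` equals `A(n)`. -/
theorem stmt15 (n : ℕ) (hn : 1 ≤ n) (H : Subgroup (PSU n))
    (hcomm : ∀ x ∈ H, ∀ y ∈ H, x * y = y * x)
    (hconn : IsConnected (H : Set (PSU n)))
    (hA : An n ≤ H) : H = An n :=
  stmt15_general n H hcomm hA
end
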